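/- Let n, r be integers with 1 < n/2 < r < n and set a = n/r. Then a(n+1)(a^n - (a-1)^n) > n(a^{n+1} - (a-1)^{n+1}). -/

import Mathlib

/-!
Clearing denominators, the difference of the two sides is `n (n^n - (r+1)(n-r)^n) / r^(n+1)`,
and `(r+1)(n-r)^n ≤ 2^n (n-r)^n = (2(n-r))^n < n^n` because `r < n` and `2(n-r) < n`.
-/

lemma div_mul_add_one_mul_sub_pow_sub {K : Type*} [Field K] (x r : K) (hr : r ≠ 0) (n : ℕ) :
    x / r * (x + 1) * ((x / r) ^ n - (x / r - 1) ^ n) - x * ((x / r) ^ (n + 1) - (x / r - 1) ^ (n + 1))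
      = x * (x ^ n - (r + 1) * (x - r) ^ n) / r ^ (n + 1) := by
  rw [div_sub_one hr, div_pow, div_pow, div_pow, div_pow]
  field_simp
  ring

lemma add_one_mul_sub_pow_lt_pow_self {n r : ℕ} (h2r : n < 2 * r) (hrn : r < n) :
    (r + 1) * (n - r) ^ n < n ^ n :=
  calc (r + 1) * (n - r) ^ n ≤ 2 ^ n * (n - r) ^ n :=
        Nat.mul_le_mul_right _ ((Nat.succ_le_of_lt hrn).trans Nat.lt_two_pow_self.le)
    _ = (2 * (n - r)) ^ n := (mul_pow ..).symm
    _ < n ^ n := Nat.pow_lt_pow_left (by omega) (by omega)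

theorem stmt_5_general (n r : ℕ) (h2 : (n : ℚ) / 2 < r) (h3 : r < n) :
    (n : ℚ) * (((n : ℚ) / r) ^ (n + 1) - ((n : ℚ) / r - 1) ^ (n + 1)) <
      ((n : ℚ) / r) * ((n : ℚ) + 1) * (((n : ℚ) / r) ^ n - ((n : ℚ) / r - 1) ^ n) := by
  have h2r : n < 2 * r := by exact_mod_cast (by linarith : (n : ℚ) < 2 * r)
  have hr : (0 : ℚ) < r := by exact_mod_cast (by omega : 0 < r)
  have key : ((r : ℚ) + 1) * ((n : ℚ) - r) ^ n < (n : ℚ) ^ n := by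
    rw [← Nat.cast_sub h3.le]
    exact_mod_cast add_one_mul_sub_pow_lt_pow_self h2r h3
  rw [← sub_pos, div_mul_add_one_mul_sub_pow_sub _ _ hr.ne']
  have hn : (0 : ℚ) < n := hr.trans (by exact_mod_cast h3)
  exact div_pos (mul_pos hn (sub_pos.mpr key)) (by positivity)

/-- For integers `n, r` with `1 < n/2 < r < n` and `a = n/r`, one has
`a(n+1)(a^n - (a-1)^n) > n(a^(n+1) - (a-1)^(n+1))`. -/
theorem stmt_5 (n r : ℕ) (h1 : (1 : ℚ) < (n : ℚ) / 2) (h2 : (n : ℚ) / 2 < r) (h3 : r < n) :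
    (n : ℚ) * (((n : ℚ) / r) ^ (n + 1) - ((n : ℚ) / r - 1) ^ (n + 1)) <
      ((n : ℚ) / r) * ((n : ℚ) + 1) * (((n : ℚ) / r) ^ n - ((n : ℚ) / r - 1) ^ n) :=
  stmt_5_general n r h2 h3
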